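/- arXiv:2306.00428 — 3 statements merged into one kernel-verified Lean document; each statement's English description precedes it below -/
import Mathlib

section
/- Let A be a positive operator on a Hilbert space H with closed range, P the orthogonal projection onto ran(A), and T, L ∈ B(H) with A^{1/2}T = L*A^{1/2}. Then the A-operator seminorm of T equals the operator norm of PL, i.e. sup{‖Th‖_A : ‖h‖_A = 1} = ‖PL‖, where ‖h‖_A = √⟨Ah,h⟩. -/
open scoped ComplexOrder

set_option synthInstance.maxHeartbeats 1000000
set_option maxHeartbeats 1000000

noncomputable section

variable {H : Type*} [NormedAddCommGroup H] [InnerProductSpace ℂ H] [CompleteSpace H]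

namespace ASpec

/-- `T` admits an `A^{1/2}`-adjoint in the von Neumann algebra `M`. -/
def HasHalfAdjointIn (M : VonNeumannAlgebra H) (A T : H →L[ℂ] H) : Prop :=
  ∃ L ∈ M, CFC.sqrt A * T = ContinuousLinearMap.adjoint L * CFC.sqrt A

/-- `M^A`: the elements of `M` admitting an `A^{1/2}`-adjoint in `M`. -/
def MA (M : VonNeumannAlgebra H) (A : H →L[ℂ] H) : Set (H →L[ℂ] H) :=
  {T | T ∈ M ∧ HasHalfAdjointIn M A T}

/-- `T` is `A`-invertible in `M^A`. -/
def AInvertible (M : VonNeumannAlgebra H) (A T : H →L[ℂ] H) : Prop :=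
  ∃ S ∈ MA M A, A * T * S = A ∧ A * S * T = A

/-- The `A`-spectrum of `T`. -/
def ASpectrum (M : VonNeumannAlgebra H) (A T : H →L[ℂ] H) : Set ℂ :=
  {lam : ℂ | ¬ AInvertible M A (lam • (1 : H →L[ℂ] H) - T)}

/-- The `A`-spectral radius of `T`. -/
def rA (M : VonNeumannAlgebra H) (A T : H →L[ℂ] H) : ℝ :=
  sSup ((‖·‖ : ℂ → ℝ) '' ASpectrum M A T)

/-- The spectrum of `P * T * P` in the corner algebra `P M P` (with unit `P`). -/
def cornerSpectrum (M : VonNeumannAlgebra H) (P T : H →L[ℂ] H) : Set ℂ :=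
  {lam : ℂ | ¬ ∃ S ∈ M, P * S * P = S ∧
      (lam • P - P * T * P) * S = P ∧ S * (lam • P - P * T * P) = P}

/-- `P` is the orthogonal projection onto the closure of the range of `A`. -/
def IsRangeProjection (A P : H →L[ℂ] H) : Prop :=
  IsSelfAdjoint P ∧ P * P = P ∧
    LinearMap.range (P : H →ₗ[ℂ] H) =
      (LinearMap.range (A : H →ₗ[ℂ] H)).topologicalClosure

/-- `A` is well-supported: `σ(A) \ {0}` is closed. -/
def WellSupported (A : H →L[ℂ] H) : Prop := IsClosed (spectrum ℂ A \ {0})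

/-- the `A`-seminorm `‖T‖_A = sup {‖Th‖_A : ‖h‖_A = 1}`. -/
def normA (A T : H →L[ℂ] H) : ℝ :=
  sSup {r : ℝ | ∃ h : H, (inner ℂ (A h) h : ℂ) = 1 ∧
    r = Real.sqrt (Complex.re (inner ℂ (A (T h)) (T h)))}

end ASpec

open ASpec in
theorem stmt2 (A P T L : H →L[ℂ] H) (hA : A.IsPositive)
    (hclosed : IsClosed (LinearMap.range (A : H →ₗ[ℂ] H) : Set H))
    (hPsa : IsSelfAdjoint P) (hP2 : P * P = P)
    (hPr : LinearMap.range (P : H →ₗ[ℂ] H) = LinearMap.range (A : H →ₗ[ℂ] H))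
    (hL : CFC.sqrt A * T = ContinuousLinearMap.adjoint L * CFC.sqrt A) :
    sSup {r : ℝ | ∃ h : H, Real.sqrt (Complex.re (inner ℂ (A h) h)) = 1 ∧
      r = Real.sqrt (Complex.re (inner ℂ (A (T h)) (T h)))} = ‖P * L‖ := by
  classical
  have hAnn : (0 : H →L[ℂ] H) ≤ A := (ContinuousLinearMap.nonneg_iff_isPositive A).mpr hA
  set B := CFC.sqrt A with hBdef
  have hBnn : (0 : H →L[ℂ] H) ≤ B := CFC.sqrt_nonneg A
  have hBsa : IsSelfAdjoint B := hBnn.isSelfAdjoint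
  have hB2 : B * B = A := CFC.sqrt_mul_sqrt_self A hAnn
  have hBadj : ContinuousLinearMap.adjoint B = B := by
    rw [← ContinuousLinearMap.star_eq_adjoint]; exact hBsa
  have hAadj : ContinuousLinearMap.adjoint A = A := by
    rw [← ContinuousLinearMap.star_eq_adjoint]; exact hAnn.isSelfAdjoint
  have hPadj : ContinuousLinearMap.adjoint P = P := by
    rw [← ContinuousLinearMap.star_eq_adjoint]; exact hPsa
  have hre : ∀ x : H, Complex.re (inner ℂ x x : ℂ) = ‖x‖ ^ 2 := fun x => by
    simpa using inner_self_eq_norm_sq (𝕜 := ℂ) x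
  have key : ∀ h : H, Complex.re (inner ℂ (A h) h : ℂ) = ‖B h‖ ^ 2 := by
    intro h
    have h1 : (inner ℂ (A h) h : ℂ) = inner ℂ (B h) (B h) := by
      have e := ContinuousLinearMap.adjoint_inner_left B h (B h)
      rw [hBadj] at e
      have hAB : A h = B (B h) := by rw [← hB2]; rfl
      rw [hAB, ← e]
    rw [h1, hre]
  have hsetc : ∀ h : H, Real.sqrt (Complex.re (inner ℂ (A h) h)) = ‖B h‖ := by
    intro h; rw [key h, Real.sqrt_sq (norm_nonneg _)]
  have hTh : ∀ h : H, B (T h) = ContinuousLinearMap.adjoint L (B h) := by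
    intro h
    have := congrArg (fun (X : H →L[ℂ] H) => X h) hL
    simpa using this
  have hsetc2 : ∀ h : H,
      Real.sqrt (Complex.re (inner ℂ (A (T h)) (T h))) =
        ‖ContinuousLinearMap.adjoint L (B h)‖ := by
    intro h; rw [hsetc (T h), hTh h]
  have hseteq : {r : ℝ | ∃ h : H, Real.sqrt (Complex.re (inner ℂ (A h) h)) = 1 ∧
      r = Real.sqrt (Complex.re (inner ℂ (A (T h)) (T h)))} =
      {r : ℝ | ∃ h : H, ‖B h‖ = 1 ∧ r = ‖ContinuousLinearMap.adjoint L (B h)‖} := by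
    ext r
    simp only [Set.mem_setOf_eq, hsetc, hTh]
  rw [hseteq]
  set S := {r : ℝ | ∃ h : H, ‖B h‖ = 1 ∧ r = ‖ContinuousLinearMap.adjoint L (B h)‖} with hSdef
  set K : Submodule ℂ H := LinearMap.range (A : H →ₗ[ℂ] H) with hKdef
  haveI : CompleteSpace K := hclosed.completeSpace_coe
  -- kernel facts
  have hkerB : ∀ k : H, A k = 0 → B k = 0 := by
    intro k hk
    have h0 : ‖B k‖ ^ 2 = 0 := by rw [← key k, hk]; simp
    have := pow_eq_zero_iff (n := 2) (by norm_num) |>.mp h0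
    exact norm_eq_zero.mp this
  have hranB : ∀ h : H, B h ∈ K := by
    intro h
    obtain ⟨a, ha, k, hk, rfl⟩ := K.exists_add_mem_mem_orthogonal h
    have hAk : A k = 0 := by
      have hmem : A (A k) ∈ K := ⟨A k, rfl⟩
      have h0 : (inner ℂ (A (A k)) k : ℂ) = 0 := (Submodule.mem_orthogonal K k).mp hk _ hmem
      have h1 : (inner ℂ (A (A k)) k : ℂ) = inner ℂ (A k) (A k) := by
        have e := ContinuousLinearMap.adjoint_inner_left A k (A k)
        rw [hAadj] at e
        rw [← e]
      rw [h1] at h0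
      exact inner_self_eq_zero.mp h0
    have hBk : B k = 0 := hkerB k hAk
    obtain ⟨z, hz⟩ := ha
    simp only [ContinuousLinearMap.coe_coe] at hz
    have hBa : B a ∈ K := by
      refine ⟨B z, ?_⟩
      have hcomm : B * A = A * B := by
        conv_lhs => rw [← hB2]
        conv_rhs => rw [← hB2]
        rw [mul_assoc]
      have hc : B (A z) = A (B z) := by
        have := congrArg (fun (X : H →L[ℂ] H) => X z) hcomm
        simpa using this
      simp only [ContinuousLinearMap.coe_coe]
      rw [← hz]
      exact hc.symm
    have : B (a + k) = B a := by rw [map_add, hBk, add_zero]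
    rw [this]; exact hBa
  have hPfix : ∀ x : H, x ∈ K → P x = x := by
    intro x hx
    rw [← hPr] at hx
    obtain ⟨w, hw⟩ := hx
    have : P (P w) = P w := by
      have := congrArg (fun (X : H →L[ℂ] H) => X w) hP2
      simpa using this
    simp only [ContinuousLinearMap.coe_coe] at hw
    rw [← hw]; exact this
  have hPnorm : ∀ y : H, ‖P y‖ ≤ ‖y‖ := by
    intro y
    have hPP : P (P y) = P y := by
      have := congrArg (fun (X : H →L[ℂ] H) => X y) hP2
      simpa using this
    have h1 : (inner ℂ (P y) (P y) : ℂ) = inner ℂ (P y) y := by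
      have e := ContinuousLinearMap.adjoint_inner_left P y (P y)
      rw [hPadj, hPP] at e
      rw [← e]
    have h2 : ‖P y‖ ^ 2 = Complex.re (inner ℂ (P y) y : ℂ) := by
      rw [← h1, hre]
    have h3 : Complex.re (inner ℂ (P y) y : ℂ) ≤ ‖(inner ℂ (P y) y : ℂ)‖ := by
      exact Complex.re_le_norm _
    have h4 : ‖(inner ℂ (P y) y : ℂ)‖ ≤ ‖P y‖ * ‖y‖ := norm_inner_le_norm _ _
    have h5 : ‖P y‖ ^ 2 ≤ ‖P y‖ * ‖y‖ := by rw [h2]; exact h3.trans h4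
    nlinarith [norm_nonneg (P y), norm_nonneg y]
  have hnormPL : ‖ContinuousLinearMap.adjoint L * P‖ = ‖P * L‖ := by
    have hadjPL : ContinuousLinearMap.adjoint (P * L) = ContinuousLinearMap.adjoint L * P := by
      rw [← ContinuousLinearMap.star_eq_adjoint, ← ContinuousLinearMap.star_eq_adjoint,
        star_mul, hPsa.star_eq]
    rw [← hadjPL]
    exact ContinuousLinearMap.adjoint.norm_map (P * L)
  have hub : ∀ r ∈ S, r ≤ ‖P * L‖ := by
    rintro r ⟨h, h1, rfl⟩
    have hBh : P (B h) = B h := hPfix _ (hranB h)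
    calc ‖ContinuousLinearMap.adjoint L (B h)‖
        = ‖(ContinuousLinearMap.adjoint L * P) (B h)‖ := by
          rw [ContinuousLinearMap.mul_apply, hBh]
      _ ≤ ‖ContinuousLinearMap.adjoint L * P‖ * ‖B h‖ :=
          ContinuousLinearMap.le_opNorm _ _
      _ = ‖P * L‖ := by rw [h1, mul_one, hnormPL]
  by_cases hBz : B = 0
  · have hA0 : A = 0 := by rw [← hB2, hBz, mul_zero]
    have hP0 : P = 0 := by
      have hK0 : K = ⊥ := by
        rw [hKdef, hA0]
        simp
      have hr : LinearMap.range (P : H →ₗ[ℂ] H) = ⊥ := by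
        rw [hPr, hK0]
      ext y
      have : (P : H →ₗ[ℂ] H) y ∈ (⊥ : Submodule ℂ H) := hr ▸ ⟨y, rfl⟩
      simpa using this
    have hSempty : S = ∅ := by
      ext r
      simp only [hSdef, Set.mem_setOf_eq, Set.mem_empty_iff_false, iff_false, not_exists]
      intro h
      rw [hBz]
      simp
    rw [hSempty, Real.sSup_empty, hP0, zero_mul, norm_zero]
  · have hex : ∃ h0 : H, B h0 ≠ 0 := by
      by_contra hc
      push_neg at hc
      exact hBz (ContinuousLinearMap.ext fun h => by simpa using hc h)
    obtain ⟨h0, hh0⟩ := hex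
    have hn0 : 0 < ‖B h0‖ := norm_pos_iff.mpr hh0
    have hh1n : ‖B (((‖B h0‖⁻¹ : ℝ) : ℂ) • h0)‖ = 1 := by
      rw [map_smul, norm_smul, Complex.norm_real, Real.norm_eq_abs,
        abs_of_nonneg (inv_nonneg.mpr hn0.le)]
      field_simp
    have hSne : S.Nonempty :=
      ⟨‖ContinuousLinearMap.adjoint L (B (((‖B h0‖⁻¹ : ℝ) : ℂ) • h0))‖, _, hh1n, rfl⟩
    have hbdd : BddAbove S := ⟨‖P * L‖, hub⟩
    have hS0 : 0 ≤ sSup S := by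
      obtain ⟨r, hr⟩ := hSne
      refine le_trans ?_ (le_csSup hbdd hr)
      obtain ⟨h, _, rfl⟩ := hr
      exact norm_nonneg _
    refine le_antisymm (Real.sSup_le hub (norm_nonneg _)) ?_
    rw [← hnormPL]
    refine ContinuousLinearMap.opNorm_le_bound _ hS0 fun y => ?_
    have hxK : P y ∈ K := by rw [← hPr]; exact ⟨y, rfl⟩
    obtain ⟨z, hz⟩ := hxK
    simp only [ContinuousLinearMap.coe_coe] at hz
    have hBBz : B (B z) = P y := by
      rw [← hz, ← ContinuousLinearMap.mul_apply, hB2]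
    by_cases hx0 : P y = 0
    · rw [ContinuousLinearMap.mul_apply, hx0, map_zero, norm_zero]
      exact mul_nonneg hS0 (norm_nonneg y)
    · have hxn : 0 < ‖P y‖ := norm_pos_iff.mpr hx0
      set h' : H := ((‖P y‖⁻¹ : ℝ) : ℂ) • (B z) with hh'def
      have hBh' : B h' = ((‖P y‖⁻¹ : ℝ) : ℂ) • (P y) := by
        rw [hh'def, map_smul, hBBz]
      have hBh'norm : ‖B h'‖ = 1 := by
        rw [hBh', norm_smul, Complex.norm_real, Real.norm_eq_abs,
          abs_of_nonneg (inv_nonneg.mpr hxn.le)]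
        field_simp
      have hmem : ‖ContinuousLinearMap.adjoint L (B h')‖ ∈ S := ⟨h', hBh'norm, rfl⟩
      have hle : ‖ContinuousLinearMap.adjoint L (B h')‖ ≤ sSup S := le_csSup hbdd hmem
      have hval : ‖ContinuousLinearMap.adjoint L (B h')‖
          = ‖P y‖⁻¹ * ‖ContinuousLinearMap.adjoint L (P y)‖ := by
        rw [hBh', map_smul, norm_smul, Complex.norm_real, Real.norm_eq_abs,
          abs_of_nonneg (inv_nonneg.mpr hxn.le)]
      have hfin : ‖ContinuousLinearMap.adjoint L (P y)‖
          = ‖P y‖ * ‖ContinuousLinearMap.adjoint L (B h')‖ := by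
        rw [hval]
        field_simp
      rw [ContinuousLinearMap.mul_apply, hfin]
      calc ‖P y‖ * ‖ContinuousLinearMap.adjoint L (B h')‖
          ≤ ‖y‖ * sSup S :=
            mul_le_mul (hPnorm y) hle (norm_nonneg _) (norm_nonneg y)
        _ = sSup S * ‖y‖ := mul_comm _ _
end
end

section
/- Let A be a positive element of a unital C*-algebra M, P a projection in M with PA = A, and suppose T ∈ M is such that there exists S ∈ M with AST = ATS = A, PTP = PT, and PSP = PS. If A has a Moore–Penrose inverse A† in M (so A†A = AA† = P), then PTP is invertible in the corner algebra PMP with inverse PSP. -/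
theorem stmt3 {M : Type*} [CStarAlgebra M] [PartialOrder M] [StarOrderedRing M]
    (A P T S Adag : M)
    (hA : 0 ≤ A) (hPsa : IsSelfAdjoint P) (hP2 : P * P = P) (hPA : P * A = A)
    (hS1 : A * S * T = A) (hS2 : A * T * S = A)
    (hPT : P * T * P = P * T) (hPS : P * S * P = P * S)
    (hdag1 : Adag * A = P) (hdag2 : A * Adag = P) :
    (P * T * P) * (P * S * P) = P ∧ (P * S * P) * (P * T * P) = P := by
  have h1 : P * T * S = P := by
    rw [← hdag1, mul_assoc Adag A T, mul_assoc Adag (A * T) S, hS2, hdag1]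
  have h2 : P * S * T = P := by
    rw [← hdag1, mul_assoc Adag A S, mul_assoc Adag (A * S) T, hS1, hdag1]
  constructor
  · rw [hPT, hPS, ← mul_assoc, hPT, h1]
  · rw [hPT, hPS, ← mul_assoc, hPS, h2]
end

section
/- Let M be a von Neumann algebra and A ∈ M positive, and let T ∈ M commute with A. Then σ_A(T) = σ(PT, PMP) where P is the range projection of A. In particular, if N is a von Neumann subalgebra of M with A ∈ N and T ∈ N commutes with A, then the A-spectrum of T computed in N equals the A-spectrum computed in M. -/
open scoped ComplexOrder

set_option synthInstance.maxHeartbeats 1000000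
set_option maxHeartbeats 1000000

noncomputable section

variable {H : Type*} [NormedAddCommGroup H] [InnerProductSpace ℂ H] [CompleteSpace H]

open ASpec

section Aux

lemma stmt14_isClosed_centralizer (s : Set (H →L[ℂ] H)) : IsClosed (Set.centralizer s) := by
  have : Set.centralizer s = ⋂ g ∈ s, {x : H →L[ℂ] H | g * x = x * g} := by
    ext x; simp [Set.mem_centralizer_iff]
  rw [this]
  exact isClosed_biInter fun g _ =>
    isClosed_eq (continuous_const.mul continuous_id) (continuous_id.mul continuous_const)

lemma stmt14_commute_cfc {a b : H →L[ℂ] H} (ha : IsSelfAdjoint a)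
    (h1 : b * a = a * b) (h2 : star b * a = a * star b) (f : ℂ → ℂ) :
    b * cfc f a = cfc f a * b := by
  have han : IsStarNormal a := ha.isStarNormal
  by_cases hf : ContinuousOn f (spectrum ℂ a)
  · have hmem : cfc f a ∈ StarAlgebra.elemental ℂ a := by
      rw [cfc_apply f a han hf, cfcHom_eq_of_isStarNormal]
      exact SetLike.coe_mem _
    have hle : StarAlgebra.elemental ℂ a ≤ StarSubalgebra.centralizer ℂ {b} := by
      apply StarAlgebra.elemental.le_of_mem
      · rw [StarSubalgebra.coe_centralizer]
        exact stmt14_isClosed_centralizer _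
      · rw [StarSubalgebra.mem_centralizer_iff]
        rintro g rfl
        exact ⟨h1.symm ▸ rfl, h2.symm ▸ rfl⟩
    exact ((StarSubalgebra.mem_centralizer_iff ℂ).mp (hle hmem) b rfl).1
  · rw [cfc_apply_of_not_continuousOn a hf, mul_zero, zero_mul]

lemma stmt14_commute_sqrt {A T : H →L[ℂ] H} (hA : (0 : H →L[ℂ] H) ≤ A)
    (h : T * A = A * T) : T * CFC.sqrt A = CFC.sqrt A * T := by
  have hsa : IsSelfAdjoint A := .of_nonneg hA
  have h2 : star T * A = A * star T := by
    have h3 := congrArg star h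
    rw [star_mul, star_mul, hsa.star_eq] at h3
    exact h3.symm
  rw [CFC.sqrt_eq_cfc, cfc_nnreal_eq_real _ A hA, cfc_real_eq_complex _ hsa]
  exact stmt14_commute_cfc hsa h h2 _

variable {A P : H →L[ℂ] H} (hA : A.IsPositive) (hP : IsRangeProjection A P)
include hA hP

omit hA in
lemma stmt14_fix : ∀ y ∈ LinearMap.range (P : H →ₗ[ℂ] H), P y = y := by
  rintro y ⟨x, rfl⟩
  have := congrArg (fun Q : H →L[ℂ] H => Q x) hP.2.1
  simpa using this

lemma stmt14_PA : P * A = A := by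
  ext x
  have hx : A x ∈ LinearMap.range (P : H →ₗ[ℂ] H) := by
    rw [hP.2.2]
    exact Submodule.le_topologicalClosure _ ⟨x, rfl⟩
  simpa using stmt14_fix hP _ hx

lemma stmt14_AP : A * P = A := by
  have h := congrArg star (stmt14_PA hA hP)
  rwa [star_mul, hA.isSelfAdjoint.star_eq, hP.1.star_eq] at h

omit hA in
lemma stmt14_memclosure (x : H) :
    P x ∈ closure ((LinearMap.range (A : H →ₗ[ℂ] H) : Set H)) := by
  have h : P x ∈ LinearMap.range (P : H →ₗ[ℂ] H) := ⟨x, rfl⟩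
  rw [hP.2.2] at h
  rwa [← Submodule.topologicalClosure_coe]

lemma stmt14_kerAP : ∀ x : H, A x = 0 → P x = 0 := by
  intro x hx
  have hadj : ContinuousLinearMap.adjoint A = A := by
    rw [← ContinuousLinearMap.star_eq_adjoint]; exact hA.isSelfAdjoint
  have hPadj : ContinuousLinearMap.adjoint P = P := by
    rw [← ContinuousLinearMap.star_eq_adjoint]; exact hP.1
  have h1 : ∀ z ∈ (LinearMap.range (A : H →ₗ[ℂ] H) : Set H), (inner ℂ x z : ℂ) = 0 := by
    rintro z ⟨y, rfl⟩
    show (inner ℂ x (A y) : ℂ) = 0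
    rw [← ContinuousLinearMap.adjoint_inner_left, hadj, hx, inner_zero_left]
  have h3 : (inner ℂ x (P x) : ℂ) = 0 := by
    refine closure_minimal h1 ?_ (stmt14_memclosure hP x)
    exact isClosed_eq (Continuous.inner continuous_const continuous_id) continuous_const
  have hfix : P (P x) = P x := by
    have := congrArg (fun Q : H →L[ℂ] H => Q x) hP.2.1
    simpa using this
  have key : (inner ℂ ((ContinuousLinearMap.adjoint P) x) (P x) : ℂ) = inner ℂ x (P (P x)) :=
    ContinuousLinearMap.adjoint_inner_left P (P x) x
  rw [hPadj, hfix, h3] at key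
  exact inner_self_eq_zero.mp key

lemma stmt14_kill {X : H →L[ℂ] H} (hX : A * X = A) : P * X = P := by
  ext x
  have h0 : A (X x - x) = 0 := by
    have := congrArg (fun Q : H →L[ℂ] H => Q x) hX
    simp only [ContinuousLinearMap.mul_apply] at this
    rw [map_sub, this, sub_self]
  have h1 := stmt14_kerAP hA hP _ h0
  rw [map_sub, sub_eq_zero] at h1
  simpa using h1

lemma stmt14_commP {g : H →L[ℂ] H} (h : g * A = A * g) : P * g = g * P := by
  have hAPz : ∀ z, A (P z) = A z := by
    intro z
    have := congrArg (fun Q : H →L[ℂ] H => Q z) (stmt14_AP hA hP)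
    simpa using this
  have hgAz : ∀ z, g (A z) = A (g z) := by
    intro z
    have := congrArg (fun Q : H →L[ℂ] H => Q z) h
    simpa using this
  ext x
  have hz : A (x - P x) = 0 := by rw [map_sub, hAPz, sub_self]
  have h1 : A (g (x - P x)) = 0 := by rw [← hgAz, hz, map_zero]
  have h2 : P (g (x - P x)) = 0 := stmt14_kerAP hA hP _ h1
  have h3 : g (P x) ∈ closure ((LinearMap.range (A : H →ₗ[ℂ] H) : Set H)) := by
    have hm : Set.MapsTo g (LinearMap.range (A : H →ₗ[ℂ] H) : Set H)
        (LinearMap.range (A : H →ₗ[ℂ] H) : Set H) := by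
      rintro z ⟨y, rfl⟩
      exact ⟨g y, (hgAz y).symm⟩
    exact hm.closure g.continuous (stmt14_memclosure hP x)
  have h4 : P (g (P x)) = g (P x) := by
    rw [← Submodule.topologicalClosure_coe, ← hP.2.2] at h3
    exact stmt14_fix hP _ h3
  have hsplit : P x + (x - P x) = x := by abel
  have : P (g x) = P (g (P x)) + P (g (x - P x)) := by
    rw [← map_add, ← map_add, hsplit]
  simp only [ContinuousLinearMap.mul_apply]
  rw [this, h2, h4, add_zero]

lemma stmt14_sqrtP : CFC.sqrt A * P = CFC.sqrt A := by
  have hA0 : (0 : H →L[ℂ] H) ≤ A := (ContinuousLinearMap.nonneg_iff_isPositive A).mpr hA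
  set B := CFC.sqrt A with hB
  have hBsa : IsSelfAdjoint B := .of_nonneg (CFC.sqrt_nonneg A)
  have hBB : B * B = A := CFC.sqrt_mul_sqrt_self A hA0
  have hBadj : ContinuousLinearMap.adjoint B = B := by
    rw [← ContinuousLinearMap.star_eq_adjoint]; exact hBsa
  have hAPz : ∀ z, A (P z) = A z := by
    intro z
    have := congrArg (fun Q : H →L[ℂ] H => Q z) (stmt14_AP hA hP)
    simpa using this
  ext x
  have hz : A (x - P x) = 0 := by rw [map_sub, hAPz, sub_self]
  have hBz : B (x - P x) = 0 := by
    have key : (inner ℂ ((ContinuousLinearMap.adjoint B) (x - P x)) (B (x - P x)) : ℂ)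
        = inner ℂ (x - P x) (B (B (x - P x))) :=
      ContinuousLinearMap.adjoint_inner_left B (B (x - P x)) (x - P x)
    have hBBz : B (B (x - P x)) = A (x - P x) := by
      have := congrArg (fun Q : H →L[ℂ] H => Q (x - P x)) hBB
      simpa using this
    rw [hBadj, hBBz, hz, inner_zero_right] at key
    exact inner_self_eq_zero.mp key
  have : B (P x) = B x := by
    rw [map_sub, sub_eq_zero] at hBz
    exact hBz.symm
  simpa using this

lemma stmt14_Psqrt : P * CFC.sqrt A = CFC.sqrt A := by
  have hBsa : IsSelfAdjoint (CFC.sqrt A) := .of_nonneg (CFC.sqrt_nonneg A)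
  have h := congrArg star (stmt14_sqrtP hA hP)
  rwa [star_mul, hBsa.star_eq, hP.1.star_eq] at h

end Aux

section Main

variable {A P T : H →L[ℂ] H} (hA : A.IsPositive) (hP : IsRangeProjection A P)
  (hcomm : T * A = A * T)
include hA hP hcomm

omit hcomm in
lemma stmt14_hx {g : H →L[ℂ] H} (hg : g * A = A * g) (lam : ℂ) :
    lam • P - P * g * P = (lam • (1 : H →L[ℂ] H) - g) * P := by
  have hTP : P * g = g * P := stmt14_commP hA hP hg
  have hPgP : P * g * P = g * P := by rw [hTP, mul_assoc, hP.2.1]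
  rw [hPgP, sub_mul, smul_mul_assoc, one_mul]

omit hcomm in
lemma stmt14_PR {g : H →L[ℂ] H} (hg : g * A = A * g) (lam : ℂ) :
    P * (lam • (1 : H →L[ℂ] H) - g) = (lam • (1 : H →L[ℂ] H) - g) * P := by
  have hTP : P * g = g * P := stmt14_commP hA hP hg
  rw [mul_sub, sub_mul, mul_smul_comm, smul_mul_assoc, mul_one, one_mul, hTP]

lemma stmt14_AInv_to_corner (M : VonNeumannAlgebra H) (hPM : P ∈ M) (lam : ℂ)
    (h : AInvertible M A (lam • (1 : H →L[ℂ] H) - T)) :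
    ∃ S ∈ M, P * S * P = S ∧
      (lam • P - P * T * P) * S = P ∧ S * (lam • P - P * T * P) = P := by
  obtain ⟨S₀, ⟨hS₀M, -⟩, h1, h2⟩ := h
  set R := lam • (1 : H →L[ℂ] H) - T with hR
  have hRA : R * A = A * R := by
    rw [sub_mul, mul_sub, smul_mul_assoc, mul_smul_comm, one_mul, mul_one, hcomm]
  have hPP : P * P = P := hP.2.1
  have hPR : P * R = R * P := stmt14_PR hA hP hcomm lam
  have hx : lam • P - P * T * P = R * P := stmt14_hx hA hP hcomm lam
  have h1' : P * (R * S₀) = P := stmt14_kill hA hP (by rw [← mul_assoc]; exact h1)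
  have h2' : P * (S₀ * R) = P := stmt14_kill hA hP (by rw [← mul_assoc]; exact h2)
  refine ⟨P * S₀ * P, mul_mem (mul_mem hPM hS₀M) hPM, ?_, ?_, ?_⟩
  · calc P * (P * S₀ * P) * P = P * P * S₀ * (P * P) := by simp only [mul_assoc]
      _ = P * S₀ * P := by rw [hPP]
  · rw [hx]
    calc R * P * (P * S₀ * P) = R * (P * P) * (S₀ * P) := by simp only [mul_assoc]
      _ = R * P * (S₀ * P) := by rw [hPP]
      _ = P * R * (S₀ * P) := by rw [hPR]
      _ = P * (R * S₀) * P := by simp only [mul_assoc]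
      _ = P * P := by rw [h1']
      _ = P := hPP
  · rw [hx]
    calc P * S₀ * P * (R * P) = P * S₀ * ((P * R) * P) := by simp only [mul_assoc]
      _ = P * S₀ * ((R * P) * P) := by rw [hPR]
      _ = P * S₀ * (R * (P * P)) := by simp only [mul_assoc]
      _ = P * S₀ * (R * P) := by rw [hPP]
      _ = P * (S₀ * R) * P := by simp only [mul_assoc]
      _ = P * P := by rw [h2']
      _ = P := hPP

lemma stmt14_corner_to_AInv (K : VonNeumannAlgebra H) (lam : ℂ) {S : H →L[ℂ] H}
    (hSK : S ∈ K) (hPSP : P * S * P = S)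
    (hxS : (lam • P - P * T * P) * S = P) (hSx : S * (lam • P - P * T * P) = P) :
    AInvertible K A (lam • (1 : H →L[ℂ] H) - T) := by
  have hA0 : (0 : H →L[ℂ] H) ≤ A := (ContinuousLinearMap.nonneg_iff_isPositive A).mpr hA
  set R := lam • (1 : H →L[ℂ] H) - T with hR
  set B := CFC.sqrt A with hB
  have hPP : P * P = P := hP.2.1
  have hPR : P * R = R * P := stmt14_PR hA hP hcomm lam
  have hx : lam • P - P * T * P = R * P := stmt14_hx hA hP hcomm lam
  rw [hx] at hxS hSx
  have hAP : A * P = A := stmt14_AP hA hP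
  have hPS : P * S = S := by
    conv_lhs => rw [← hPSP]
    rw [← mul_assoc, ← mul_assoc, hPP, hPSP]
  have hSP : S * P = S := by
    conv_lhs => rw [← hPSP]
    rw [mul_assoc, hPP, hPSP]
  have hRS : R * S = P := by
    rw [← hPS, ← mul_assoc]
    exact hxS
  have hSR : S * R = P := by
    rw [← hSP, mul_assoc, hPR]
    exact hSx
  have hTB : T * B = B * T := stmt14_commute_sqrt hA0 hcomm
  have hBR : B * R = R * B := by
    rw [mul_sub, sub_mul, mul_smul_comm, smul_mul_assoc, mul_one, one_mul, hTB]
  have hPB : P * B = B := stmt14_Psqrt hA hP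
  have hBP : B * P = B := stmt14_sqrtP hA hP
  have hxB : B * (R * P) = (R * P) * B := by
    calc B * (R * P) = (B * R) * P := (mul_assoc B R P).symm
      _ = (R * B) * P := by rw [hBR]
      _ = R * (B * P) := mul_assoc R B P
      _ = R * B := by rw [hBP]
      _ = R * (P * B) := by rw [hPB]
      _ = (R * P) * B := (mul_assoc R P B).symm
  have hBS : B * S = S * B := by
    calc B * S = (P * B) * S := by rw [hPB]
      _ = ((S * (R * P)) * B) * S := by conv_lhs => rw [← hSx]
      _ = S * (((R * P) * B) * S) := by simp only [mul_assoc]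
      _ = S * ((B * (R * P)) * S) := by rw [hxB]
      _ = (S * B) * ((R * P) * S) := by simp only [mul_assoc]
      _ = (S * B) * P := by rw [hxS]
      _ = S * (B * P) := mul_assoc S B P
      _ = S * B := by rw [hBP]
  refine ⟨S, ⟨hSK, star S, star_mem hSK, ?_⟩, ?_, ?_⟩
  · rw [← ContinuousLinearMap.star_eq_adjoint, star_star]
    exact hBS
  · rw [mul_assoc, hRS]; exact hAP
  · rw [mul_assoc, hSR]; exact hAP

lemma stmt14_corner_mem (N : VonNeumannAlgebra H) (hAN : A ∈ N) (hTN : T ∈ N)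
    (lam : ℂ) {S : H →L[ℂ] H} (hPSP : P * S * P = S)
    (hxS : (lam • P - P * T * P) * S = P) (hSx : S * (lam • P - P * T * P) = P) :
    S ∈ N := by
  set x := lam • P - P * T * P with hxdef
  have hPP : P * P = P := hP.2.1
  have hPS : P * S = S := by
    conv_lhs => rw [← hPSP]
    rw [← mul_assoc, ← mul_assoc, hPP, hPSP]
  have hSP : S * P = S := by
    conv_lhs => rw [← hPSP]
    rw [mul_assoc, hPP, hPSP]
  have key : ∀ g ∈ N.commutant, g * S = S * g := by
    intro g hg
    have hgmem := VonNeumannAlgebra.mem_commutant_iff.mp hg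
    have hgA : g * A = A * g := (hgmem A hAN).symm
    have hgT : g * T = T * g := (hgmem T hTN).symm
    have hPgc : P * g = g * P := stmt14_commP hA hP hgA
    have hgPTP : g * (P * T * P) = (P * T * P) * g := by
      calc g * (P * T * P) = ((g * P) * T) * P := by simp only [mul_assoc]
        _ = ((P * g) * T) * P := by rw [hPgc]
        _ = (P * (g * T)) * P := by rw [mul_assoc P g T]
        _ = (P * (T * g)) * P := by rw [hgT]
        _ = ((P * T) * g) * P := by rw [mul_assoc P T g]
        _ = (P * T) * (g * P) := by rw [mul_assoc]
        _ = (P * T) * (P * g) := by rw [hPgc]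
        _ = ((P * T) * P) * g := (mul_assoc (P * T) P g).symm
    have hgx : g * x = x * g := by
      rw [hxdef, mul_sub, sub_mul, mul_smul_comm, smul_mul_assoc, hgPTP, hPgc]
    have e : S * g = S * g * P := by
      calc S * g = (S * P) * g := by rw [hSP]
        _ = S * (P * g) := mul_assoc S P g
        _ = S * (g * P) := by rw [hPgc]
        _ = (S * g) * P := (mul_assoc S g P).symm
    have E1 : S * ((g * x) * S) = g * S := by
      calc S * ((g * x) * S) = S * ((x * g) * S) := by rw [hgx]
        _ = (S * x) * (g * S) := by simp only [mul_assoc]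
        _ = P * (g * S) := by rw [hSx]
        _ = (P * g) * S := (mul_assoc P g S).symm
        _ = (g * P) * S := by rw [hPgc]
        _ = g * (P * S) := mul_assoc g P S
        _ = g * S := by rw [hPS]
    have E2 : S * ((g * x) * S) = S * g := by
      calc S * ((g * x) * S) = (S * g) * (x * S) := by simp only [mul_assoc]
        _ = (S * g) * P := by rw [hxS]
        _ = S * g := e.symm
    rw [← E1, E2]
  have hmem : S ∈ N.commutant.commutant := VonNeumannAlgebra.mem_commutant_iff.mpr key
  rwa [N.commutant_commutant] at hmem

end Main

open ASpec in
theorem stmt14 (M N : VonNeumannAlgebra H) (A P T : H →L[ℂ] H) (hA : A.IsPositive)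
    (hAM : A ∈ M) (hTM : T ∈ M) (hcomm : T * A = A * T)
    (hP : IsRangeProjection A P) (hPM : P ∈ M)
    (hNM : (N : Set (H →L[ℂ] H)) ⊆ (M : Set (H →L[ℂ] H))) (hAN : A ∈ N) (hTN : T ∈ N) :
    ASpectrum M A T = cornerSpectrum M P T ∧ ASpectrum N A T = ASpectrum M A T := by
  constructor
  · ext lam
    simp only [ASpectrum, cornerSpectrum, Set.mem_setOf_eq]
    apply not_congr
    constructor
    · exact stmt14_AInv_to_corner hA hP hcomm M hPM lam
    · rintro ⟨S, hSM, hPSP, hxS, hSx⟩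
      exact stmt14_corner_to_AInv hA hP hcomm M lam hSM hPSP hxS hSx
  · ext lam
    simp only [ASpectrum, Set.mem_setOf_eq]
    apply not_congr
    constructor
    · rintro ⟨S, ⟨hSN, L, hLN, hL⟩, h1, h2⟩
      exact ⟨S, ⟨hNM hSN, L, hNM hLN, hL⟩, h1, h2⟩
    · intro hM
      obtain ⟨S, hSM, hPSP, hxS, hSx⟩ := stmt14_AInv_to_corner hA hP hcomm M hPM lam hM
      have hSN : S ∈ N := stmt14_corner_mem hA hP hcomm N hAN hTN lam hPSP hxS hSx
      exact stmt14_corner_to_AInv hA hP hcomm N lam hSN hPSP hxS hSx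
end
end
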